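/- arXiv:2308.08078 — 3 statements merged into one kernel-verified Lean document; each statement's English description precedes it below -/
import Mathlib

section
/- Let (X, ‖·‖) be a Banach space, let 𝔅 : X × X → X be a continuous bilinear operator, and let η > 0 satisfy η ≥ ‖𝔅‖. Then for any x₀ ∈ X such that 4η‖x₀‖ < 1, there exists one and only one x ∈ X with ‖x‖ < 1/(2η) solving the equation x = x₀ + 𝔅(x,x); moreover this solution satisfies ‖x‖ ≤ 2‖x₀‖. -/
noncomputable section

/-- the abstract fixed point lemma for a continuous bilinear operator `𝔅`
on a Banach space `X` (represented, as usual, as a continuous-linear-map-valued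
continuous linear map, whose operator norm `‖𝔅‖` is the least `C ≥ 0` with
`‖𝔅(x,y)‖ ≤ C‖x‖‖y‖`): if `η ≥ ‖𝔅‖`, `η > 0`, and `4η‖x₀‖ < 1`, then the equation
`x = x₀ + 𝔅(x,x)` has exactly one solution with `‖x‖ < 1/(2η)`, and this solution
satisfies `‖x‖ ≤ 2‖x₀‖`. -/
theorem bilinear_fixed_point {X : Type*} [NormedAddCommGroup X] [NormedSpace ℝ X]
    [CompleteSpace X] (B : X →L[ℝ] X →L[ℝ] X) (η : ℝ) (hη : 0 < η)
    (hηB : ‖B‖ ≤ η) (x₀ : X) (hx₀ : 4 * η * ‖x₀‖ < 1) :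
    (∃ x : X, (‖x‖ < 1 / (2 * η) ∧ x = x₀ + B x x) ∧ ‖x‖ ≤ 2 * ‖x₀‖) ∧
    (∀ x y : X, (‖x‖ < 1 / (2 * η) ∧ x = x₀ + B x x) →
      (‖y‖ < 1 / (2 * η) ∧ y = x₀ + B y y) → x = y) := by
  have hBle : ∀ a c : X, ‖B a c‖ ≤ η * ‖a‖ * ‖c‖ := fun a c => by
    calc ‖B a c‖ ≤ ‖B‖ * ‖a‖ * ‖c‖ := B.le_opNorm₂ a c
    _ ≤ η * ‖a‖ * ‖c‖ := by gcongr
  have hρlt : 2 * ‖x₀‖ < 1 / (2 * η) := by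
    rw [lt_div_iff₀ (by positivity)]
    nlinarith
  -- uniqueness
  have uniq : ∀ x y : X, (‖x‖ < 1 / (2 * η) ∧ x = x₀ + B x x) →
      (‖y‖ < 1 / (2 * η) ∧ y = x₀ + B y y) → x = y := by
    intro x y ⟨hxn, hxe⟩ ⟨hyn, hye⟩
    have hxh : η * ‖x‖ < 1 / 2 := by
      have := (lt_div_iff₀ (by positivity : (0:ℝ) < 2 * η)).1 hxn
      nlinarith
    have hyh : η * ‖y‖ < 1 / 2 := by
      have := (lt_div_iff₀ (by positivity : (0:ℝ) < 2 * η)).1 hyn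
      nlinarith
    have h1 : x - y = B x x - B y y := by
      conv_lhs => rw [hxe, hye]
      abel
    have hdec : B x (x - y) + B (x - y) y = B x x - B y y := by
      rw [map_sub (B x), map_sub B x y, ContinuousLinearMap.sub_apply]
      abel
    have hle : ‖x - y‖ ≤ η * ‖x‖ * ‖x - y‖ + η * ‖x - y‖ * ‖y‖ := by
      calc ‖x - y‖ = ‖B x (x - y) + B (x - y) y‖ := congrArg norm (h1.trans hdec.symm)
      _ ≤ ‖B x (x - y)‖ + ‖B (x - y) y‖ := norm_add_le _ _
      _ ≤ η * ‖x‖ * ‖x - y‖ + η * ‖x - y‖ * ‖y‖ := add_le_add (hBle _ _) (hBle _ _)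
    by_contra hne
    have h0 : 0 < ‖x - y‖ := norm_pos_iff.2 (sub_ne_zero.2 hne)
    nlinarith
  refine ⟨?_, uniq⟩
  -- existence via the contraction mapping principle on the ball of radius 2‖x₀‖
  set s : Set X := Metric.closedBall (0 : X) (2 * ‖x₀‖) with hs
  have hmem : ∀ a : X, a ∈ s → x₀ + B a a ∈ s := by
    intro a ha
    rw [hs, mem_closedBall_zero_iff] at ha ⊢
    calc ‖x₀ + B a a‖ ≤ ‖x₀‖ + ‖B a a‖ := norm_add_le _ _
    _ ≤ ‖x₀‖ + η * ‖a‖ * ‖a‖ := by linarith [hBle a a]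
    _ ≤ ‖x₀‖ + η * (2 * ‖x₀‖) * (2 * ‖x₀‖) := by gcongr
    _ ≤ 2 * ‖x₀‖ := by nlinarith [norm_nonneg x₀, hη.le]
  have hsc : IsClosed s := Metric.isClosed_closedBall
  haveI : CompleteSpace s := hsc.completeSpace_coe
  haveI : Nonempty s := ⟨⟨0, Metric.mem_closedBall_self (by positivity)⟩⟩
  set K : NNReal := Real.toNNReal (4 * η * ‖x₀‖) with hK
  have hKcoe : (K : ℝ) = 4 * η * ‖x₀‖ := Real.coe_toNNReal _ (by positivity)
  set F : s → s := fun a => ⟨x₀ + B a a, hmem a a.2⟩ with hF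
  have hlip : LipschitzWith K F := by
    apply LipschitzWith.of_dist_le_mul
    intro a b
    have ha : ‖(a : X)‖ ≤ 2 * ‖x₀‖ := mem_closedBall_zero_iff.1 a.2
    have hb : ‖(b : X)‖ ≤ 2 * ‖x₀‖ := mem_closedBall_zero_iff.1 b.2
    rw [Subtype.dist_eq, Subtype.dist_eq, hKcoe]
    simp only [hF, dist_eq_norm]
    have hdec : (x₀ + B a a) - (x₀ + B b b) = B a ((a:X) - b) + B ((a:X) - b) b := by
      rw [map_sub (B (a:X)), map_sub B (a:X) (b:X), ContinuousLinearMap.sub_apply]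
      abel
    calc ‖(x₀ + B a a) - (x₀ + B b b)‖ = ‖B a ((a:X) - b) + B ((a:X) - b) b‖ := by rw [hdec]
    _ ≤ ‖B a ((a:X) - b)‖ + ‖B ((a:X) - b) b‖ := norm_add_le _ _
    _ ≤ η * ‖(a:X)‖ * ‖(a:X) - b‖ + η * ‖(a:X) - b‖ * ‖(b:X)‖ :=
        add_le_add (hBle _ _) (hBle _ _)
    _ = η * (‖(a:X)‖ + ‖(b:X)‖) * ‖(a:X) - b‖ := by ring
    _ ≤ η * (2 * ‖x₀‖ + 2 * ‖x₀‖) * ‖(a:X) - b‖ := by gcongr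
    _ = 4 * η * ‖x₀‖ * ‖(a:X) - b‖ := by ring
  have hC : ContractingWith K F := by
    refine ⟨?_, hlip⟩
    rw [← NNReal.coe_lt_coe, hKcoe]; exact hx₀
  set x : s := ContractingWith.fixedPoint F hC with hxdef
  have hfix : F x = x := hC.fixedPoint_isFixedPt
  have hxval : (x : X) = x₀ + B x x := (congrArg Subtype.val hfix).symm
  have hxn : ‖(x : X)‖ ≤ 2 * ‖x₀‖ := mem_closedBall_zero_iff.1 x.2
  exact ⟨x, ⟨lt_of_le_of_lt hxn hρlt, hxval⟩, hxn⟩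
end
end

section
/- (Semigroup estimate from Y^{−1} to 𝒳³.) There exists a constant C > 0, depending only on n, L_1,…,L_n and T, such that for every zero-mean ψ₀ with ‖ψ₀‖_{Y^{−1}} < ∞ one has ‖Sψ₀‖_{𝒳³} = Σ_{k∈ℤⁿ_*} ∫_0^T |k|³ e^{−tσ(k)} |ψ̂₀(k)| dt ≤ C ‖ψ₀‖_{Y^{−1}}. -/
open MeasureTheory
open scoped BigOperators ENNReal NNReal

noncomputable section

/-- Euclidean norm `|k|` of a lattice point `k ∈ ℤⁿ`. -/
def knorm {n : ℕ} (k : Fin n → ℤ) : ℝ := Real.sqrt (∑ i, ((k i : ℝ)) ^ 2)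

/-- The Fourier symbol `σ(k)` of `Δ² + Δ` on the torus `∏ᵢ [0, Lᵢ]`. -/
def ksSymbol {n : ℕ} (L : Fin n → ℝ) (k : Fin n → ℤ) : ℝ :=
  (∑ i, (2 * Real.pi / L i) ^ 2 * ((k i : ℝ)) ^ 2) ^ 2
    - ∑ i, (2 * Real.pi / L i) ^ 2 * ((k i : ℝ)) ^ 2

/-- The time interval `[0, T]`, where `T = ⊤` is allowed (giving `[0, ∞)`). -/
def timeSet (T : ℝ≥0∞) : Set ℝ := {t : ℝ | 0 ≤ t ∧ ENNReal.ofReal t ≤ T}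

/-- Case A (`Lᵢ < 2π` for all `i` and `T = ∞`) or Case B (`T ∈ (0, ∞)`). -/
def CaseAB {n : ℕ} (L : Fin n → ℝ) (T : ℝ≥0∞) : Prop :=
  (T = ⊤ ∧ ∀ i, L i < 2 * Real.pi) ∨ (0 < T ∧ T ≠ ⊤)

/-- `‖f‖_{Y^m} = Σ_{k ∈ ℤⁿ_*} |k|^m |f̂(k)|` (zero-mean functions are identified with
their Fourier coefficient sequences on `ℤⁿ_* = ℤⁿ \ {0}`). -/
def Ynorm {n : ℕ} (m : ℝ) (f : (Fin n → ℤ) → ℂ) : ℝ≥0∞ :=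
  ∑' k : {k : Fin n → ℤ // k ≠ 0}, ENNReal.ofReal (knorm k.1 ^ m * ‖f k.1‖)

/-- `‖f‖_{𝒴^m} = Σ_{k ∈ ℤⁿ_*} sup_{t ∈ [0,T]} |k|^m |f̂(t,k)|`. -/
def calYnorm {n : ℕ} (T : ℝ≥0∞) (m : ℝ) (f : ℝ → (Fin n → ℤ) → ℂ) : ℝ≥0∞ :=
  ∑' k : {k : Fin n → ℤ // k ≠ 0},
    ⨆ t ∈ timeSet T, ENNReal.ofReal (knorm k.1 ^ m * ‖f t k.1‖)

/-- `‖f‖_{𝒳^m} = Σ_{k ∈ ℤⁿ_*} ∫_0^T |k|^m |f̂(t,k)| dt`. -/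
def calXnorm {n : ℕ} (T : ℝ≥0∞) (m : ℝ) (f : ℝ → (Fin n → ℤ) → ℂ) : ℝ≥0∞ :=
  ∑' k : {k : Fin n → ℤ // k ≠ 0},
    ∫⁻ t in timeSet T, ENNReal.ofReal (knorm k.1 ^ m * ‖f t k.1‖)

/-- `‖f‖_{PM^m} = sup_{k ∈ ℤⁿ_*} |k|^m |f̂(k)|`. -/
def PMnorm {n : ℕ} (m : ℝ) (f : (Fin n → ℤ) → ℂ) : ℝ≥0∞ :=
  ⨆ k : {k : Fin n → ℤ // k ≠ 0}, ENNReal.ofReal (knorm k.1 ^ m * ‖f k.1‖)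

/-- `‖f‖_{𝒫ℳ^m} = sup_{t ∈ [0,T]} sup_{k ∈ ℤⁿ_*} |k|^m |f̂(t,k)|`. -/
def calPMnorm {n : ℕ} (T : ℝ≥0∞) (m : ℝ) (f : ℝ → (Fin n → ℤ) → ℂ) : ℝ≥0∞ :=
  ⨆ t ∈ timeSet T, ⨆ k : {k : Fin n → ℤ // k ≠ 0},
    ENNReal.ofReal (knorm k.1 ^ m * ‖f t k.1‖)

/-- The semigroup `S`, acting on Fourier coefficients: `(Sψ₀)^(t,k) = e^{-tσ(k)} ψ̂₀(k)`. -/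
def ksSemigroup {n : ℕ} (L : Fin n → ℝ) (ψ₀ : (Fin n → ℤ) → ℂ) :
    ℝ → (Fin n → ℤ) → ℂ :=
  fun t k => (Real.exp (-(t * ksSymbol L k)) : ℂ) * ψ₀ k

/-- The (normalized) bilinear operator `B`, given on Fourier coefficients by
`B̂(F,G)(t,k) = -∫_0^t e^{-(t-s)σ(k)} Σ_{j ∈ ℤⁿ_*, j ≠ k} ((k-j)·j) F̂(s,k-j) Ĝ(s,j) ds`. -/
def ksBilinear {n : ℕ} (L : Fin n → ℝ) (F G : ℝ → (Fin n → ℤ) → ℂ) :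
    ℝ → (Fin n → ℤ) → ℂ :=
  fun t k =>
    -∫ s in Set.Ioc (0 : ℝ) t,
      (Real.exp (-((t - s) * ksSymbol L k)) : ℂ) *
        ∑' j : {j : Fin n → ℤ // j ≠ 0 ∧ j ≠ k},
          ((∑ i, ((k i : ℝ) - (j.1 i : ℝ)) * (j.1 i : ℝ) : ℝ) : ℂ) *
            F s (k - j.1) * G s j.1

/-- `ψ` is a mild solution of the Kuramoto–Sivashinsky equation on `[0,T]` with data `ψ₀`:
`ψ̂(t,k) = e^{-tσ(k)} ψ̂₀(k) - (1/2) B̂(ψ,ψ)(t,k)` for all `t ∈ [0,T]`, `k ∈ ℤⁿ_*`. -/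
def IsMildSolution {n : ℕ} (L : Fin n → ℝ) (T : ℝ≥0∞)
    (ψ₀ : (Fin n → ℤ) → ℂ) (ψ : ℝ → (Fin n → ℤ) → ℂ) : Prop :=
  ∀ t ∈ timeSet T, ∀ k : Fin n → ℤ, k ≠ 0 →
    ψ t k = (Real.exp (-(t * ksSymbol L k)) : ℂ) * ψ₀ k
      - (1 / 2 : ℂ) * ksBilinear L ψ ψ t k

/-!
For `k ≠ 0` the symbol grows like `|k|⁴`: with `q = Σᵢ (2π/Lᵢ)² kᵢ² ≥ a|k|²` one has
`σ = q² - q ≥ a(a - 1)|k|⁴` when every `2π/Lᵢ > 1` (Case A), and always `σ + 1 ≥ q²/2 ≥ a²|k|⁴/2`.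
Hence `∫_0^T e^{-tσ(k)} dt ≤ e^{μT}/(σ(k) + μ) ≲ |k|⁻⁴` (with `μ = 0`, resp. `μ = 1` and `T < ∞`),
and the factor `|k|⁻⁴` turns the weight `|k|³` of `𝒳³` into the weight `|k|⁻¹` of `Y⁻¹`.
-/

lemma knorm_sq {n : ℕ} (k : Fin n → ℤ) : knorm k ^ 2 = ∑ i, ((k i : ℝ)) ^ 2 :=
  Real.sq_sqrt (Finset.sum_nonneg fun _ _ => sq_nonneg _)

lemma one_le_knorm {n : ℕ} {k : Fin n → ℤ} (hk : k ≠ 0) : 1 ≤ knorm k := by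
  obtain ⟨i, hi⟩ := Function.ne_iff.mp hk
  have hi : k i ≠ 0 := hi
  have hki : (1 : ℝ) ≤ (k i : ℝ) ^ 2 := by
    have : (0 : ℤ) < k i ^ 2 := by positivity
    exact_mod_cast this
  exact Real.one_le_sqrt.mpr <| hki.trans <|
    Finset.single_le_sum (f := fun j => ((k j : ℝ)) ^ 2) (fun _ _ => sq_nonneg _)
      (Finset.mem_univ i)

lemma Finite.exists_gt_forall_le {ι α : Type*} [Finite ι] [LinearOrder α] [NoMaxOrder α]
    {c : ι → α} {b : α} (hc : ∀ i, b < c i) : ∃ a, b < a ∧ ∀ i, a ≤ c i := by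
  rcases isEmpty_or_nonempty ι with hι | hι
  · obtain ⟨a, ha⟩ := exists_gt b
    exact ⟨a, ha, isEmptyElim⟩
  · obtain ⟨j, hj⟩ := Finite.exists_min c
    exact ⟨c j, hc j, hj⟩

/-- The squared modulus `|ξ|²` of the wave vector `ξᵢ = 2π kᵢ / Lᵢ`. -/
def waveNumberSq {n : ℕ} (L : Fin n → ℝ) (k : Fin n → ℤ) : ℝ :=
  ∑ i, (2 * Real.pi / L i) ^ 2 * ((k i : ℝ)) ^ 2

lemma ksSymbol_eq {n : ℕ} (L : Fin n → ℝ) (k : Fin n → ℤ) :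
    ksSymbol L k = waveNumberSq L k ^ 2 - waveNumberSq L k := rfl

lemma mul_knorm_sq_le_waveNumberSq {n : ℕ} {L : Fin n → ℝ} {a : ℝ}
    (ha : ∀ i, a ≤ (2 * Real.pi / L i) ^ 2) (k : Fin n → ℤ) :
    a * knorm k ^ 2 ≤ waveNumberSq L k := by
  rw [knorm_sq, Finset.mul_sum]
  exact Finset.sum_le_sum fun i _ => mul_le_mul_of_nonneg_right (ha i) (sq_nonneg _)

lemma mul_sub_one_mul_sq_le_sq_sub_self {a s q : ℝ} (ha : 1 < a) (hs : 1 ≤ s)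
    (hq : a * s ≤ q) : a * (a - 1) * s ^ 2 ≤ q ^ 2 - q := by
  have hs' : (a - 1) * s ≤ a * s - 1 := by nlinarith
  calc a * (a - 1) * s ^ 2 = (a * s) * ((a - 1) * s) := by ring
    _ ≤ q * (q - 1) := by gcongr <;> nlinarith
    _ = q ^ 2 - q := by ring

lemma sq_div_two_mul_sq_le_sq_sub_self_add_one {a s q : ℝ} (has : 0 ≤ a * s)
    (hq : a * s ≤ q) : a ^ 2 / 2 * s ^ 2 ≤ q ^ 2 - q + 1 := by
  nlinarith [sq_nonneg (q - 1), mul_le_mul hq hq has (has.trans hq)]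

/-- After the shift `σ ↦ σ + μ` the symbol is coercive of order four; the shift costs a factor
`e^{tμ} ≤ e^M` on the time interval. -/
lemma CaseAB.exists_shifted_coercivity {n : ℕ} {L : Fin n → ℝ} (hL : ∀ i, 0 < L i)
    {T : ℝ≥0∞} (hT : CaseAB L T) :
    ∃ μ M ε : ℝ, 0 < ε ∧ (∀ t ∈ timeSet T, t * μ ≤ M) ∧
      ∀ k : Fin n → ℤ, k ≠ 0 → ε * knorm k ^ 4 ≤ ksSymbol L k + μ := by
  have hpow : ∀ k : Fin n → ℤ, knorm k ^ 4 = (knorm k ^ 2) ^ 2 := fun k => by ring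
  rcases hT with ⟨-, hLsmall⟩ | ⟨-, hTne⟩
  · obtain ⟨a, ha, hac⟩ := Finite.exists_gt_forall_le (b := 1)
      (c := fun i => (2 * Real.pi / L i) ^ 2) fun i =>
        one_lt_pow₀ ((one_lt_div (hL i)).mpr (hLsmall i)) two_ne_zero
    refine ⟨0, 0, a * (a - 1), by nlinarith, fun t _ => by simp, fun k hk => ?_⟩
    have hk1 : 1 ≤ knorm k ^ 2 := one_le_pow₀ (one_le_knorm hk)
    rw [add_zero, hpow, ksSymbol_eq]
    exact mul_sub_one_mul_sq_le_sq_sub_self ha hk1 (mul_knorm_sq_le_waveNumberSq hac k)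
  · obtain ⟨a, ha, hac⟩ := Finite.exists_gt_forall_le (b := 0)
      (c := fun i => (2 * Real.pi / L i) ^ 2) fun i => by have := hL i; positivity
    refine ⟨1, T.toReal, a ^ 2 / 2, by positivity, fun t ht => ?_, fun k _ => ?_⟩
    · rw [mul_one]
      exact (ENNReal.ofReal_le_iff_le_toReal hTne).mp ht.2
    · rw [hpow, ksSymbol_eq]
      exact sq_div_two_mul_sq_le_sq_sub_self_add_one (by positivity)
        (mul_knorm_sq_le_waveNumberSq hac k)

lemma lintegral_Ici_exp_neg_mul {b : ℝ} (hb : 0 < b) :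
    ∫⁻ t in Set.Ici (0 : ℝ), ENNReal.ofReal (Real.exp (-(t * b))) = ENNReal.ofReal (1 / b) := by
  rw [setLIntegral_congr Ioi_ae_eq_Ici.symm, ← ofReal_integral_eq_lintegral_ofReal]
  · congr 1
    calc ∫ t in Set.Ioi (0 : ℝ), Real.exp (-(t * b))
        = ∫ t in Set.Ioi (0 : ℝ), Real.exp (-(b * t)) := by simp_rw [mul_comm]
      _ = b⁻¹ • ∫ x in Set.Ioi (0 : ℝ), Real.exp (-x) := by
          simpa only [mul_zero] using integral_comp_mul_left_Ioi (fun x => Real.exp (-x)) 0 hb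
      _ = 1 / b := by rw [integral_exp_neg_Ioi_zero, smul_eq_mul, mul_one, one_div]
  · simpa [mul_comm, IntegrableOn] using exp_neg_integrableOn_Ioi 0 hb
  · exact Filter.Eventually.of_forall fun t => (Real.exp_pos _).le

lemma timeSet_subset_Ici (T : ℝ≥0∞) : timeSet T ⊆ Set.Ici 0 := fun _ ht => ht.1

lemma lintegral_timeSet_exp_neg_mul_le {T : ℝ≥0∞} {σ μ M : ℝ} (hσμ : 0 < σ + μ)
    (hM : ∀ t ∈ timeSet T, t * μ ≤ M) :
    ∫⁻ t in timeSet T, ENNReal.ofReal (Real.exp (-(t * σ)))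
      ≤ ENNReal.ofReal (Real.exp M / (σ + μ)) := by
  calc ∫⁻ t in timeSet T, ENNReal.ofReal (Real.exp (-(t * σ)))
      ≤ ∫⁻ t in timeSet T,
          ENNReal.ofReal (Real.exp M) * ENNReal.ofReal (Real.exp (-(t * (σ + μ)))) := by
        refine setLIntegral_mono (by fun_prop) fun t ht => ?_
        rw [← ENNReal.ofReal_mul (Real.exp_pos M).le, ← Real.exp_add]
        gcongr
        linarith [hM t ht]
    _ ≤ ENNReal.ofReal (Real.exp M) *
          ∫⁻ t in Set.Ici (0 : ℝ), ENNReal.ofReal (Real.exp (-(t * (σ + μ)))) := by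
        rw [lintegral_const_mul' _ _ ENNReal.ofReal_ne_top]
        gcongr
        exact timeSet_subset_Ici T
    _ = ENNReal.ofReal (Real.exp M / (σ + μ)) := by
        rw [lintegral_Ici_exp_neg_mul hσμ, ← ENNReal.ofReal_mul (Real.exp_pos M).le, mul_one_div]

lemma CaseAB.exists_lintegral_exp_neg_mul_ksSymbol_le {n : ℕ} {L : Fin n → ℝ}
    (hL : ∀ i, 0 < L i) {T : ℝ≥0∞} (hT : CaseAB L T) :
    ∃ C : ℝ, 0 < C ∧ ∀ k : Fin n → ℤ, k ≠ 0 →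
      ∫⁻ t in timeSet T, ENNReal.ofReal (Real.exp (-(t * ksSymbol L k)))
        ≤ ENNReal.ofReal (C * knorm k ^ (-4 : ℝ)) := by
  obtain ⟨μ, M, ε, hε, hM, hcoer⟩ := hT.exists_shifted_coercivity hL
  refine ⟨Real.exp M / ε, by positivity, fun k hk => ?_⟩
  have hk4 : 0 < ε * knorm k ^ 4 := by have := one_le_knorm hk; positivity
  refine (lintegral_timeSet_exp_neg_mul_le (hk4.trans_le (hcoer k hk)) hM).trans ?_
  gcongr
  calc Real.exp M / (ksSymbol L k + μ) ≤ Real.exp M / (ε * knorm k ^ 4) := by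
        gcongr; exact hcoer k hk
    _ = Real.exp M / ε * knorm k ^ (-4 : ℝ) := by
        rw [Real.rpow_neg (x := knorm k) (Real.sqrt_nonneg _), show (4 : ℝ) = (4 : ℕ) by norm_num,
          Real.rpow_natCast, div_mul_eq_div_div, div_eq_mul_inv (_ / ε)]

lemma norm_ksSemigroup {n : ℕ} (L : Fin n → ℝ) (ψ₀ : (Fin n → ℤ) → ℂ) (t : ℝ)
    (k : Fin n → ℤ) : ‖ksSemigroup L ψ₀ t k‖ = Real.exp (-(t * ksSymbol L k)) * ‖ψ₀ k‖ := by
  rw [ksSemigroup, norm_mul, Complex.norm_real, Real.norm_of_nonneg (Real.exp_pos _).le]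

lemma calXnorm_ksSemigroup_le {n : ℕ} {L : Fin n → ℝ} {T : ℝ≥0∞} {C : ℝ} (hC : 0 ≤ C)
    (hdecay : ∀ k : Fin n → ℤ, k ≠ 0 →
      ∫⁻ t in timeSet T, ENNReal.ofReal (Real.exp (-(t * ksSymbol L k)))
        ≤ ENNReal.ofReal (C * knorm k ^ (-4 : ℝ)))
    (m : ℝ) (ψ₀ : (Fin n → ℤ) → ℂ) :
    calXnorm T m (ksSemigroup L ψ₀) ≤ ENNReal.ofReal C * Ynorm (m - 4) ψ₀ := by
  rw [calXnorm, Ynorm, ← ENNReal.tsum_mul_left]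
  refine ENNReal.tsum_le_tsum fun ⟨k, hk⟩ => ?_
  have hpos : 0 < knorm k := zero_lt_one.trans_le (one_le_knorm hk)
  have hweight : 0 ≤ knorm k ^ m * ‖ψ₀ k‖ := by positivity
  calc ∫⁻ t in timeSet T, ENNReal.ofReal (knorm k ^ m * ‖ksSemigroup L ψ₀ t k‖)
      = ENNReal.ofReal (knorm k ^ m * ‖ψ₀ k‖) *
          ∫⁻ t in timeSet T, ENNReal.ofReal (Real.exp (-(t * ksSymbol L k))) := by
        rw [← lintegral_const_mul' _ _ ENNReal.ofReal_ne_top]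
        refine lintegral_congr fun t => ?_
        rw [← ENNReal.ofReal_mul hweight, norm_ksSemigroup]
        ring_nf
    _ ≤ ENNReal.ofReal (knorm k ^ m * ‖ψ₀ k‖) * ENNReal.ofReal (C * knorm k ^ (-4 : ℝ)) := by
        gcongr; exact hdecay k hk
    _ = ENNReal.ofReal C * ENNReal.ofReal (knorm k ^ (m - 4) * ‖ψ₀ k‖) := by
        rw [← ENNReal.ofReal_mul hweight, ← ENNReal.ofReal_mul hC, sub_eq_add_neg,
          Real.rpow_add hpos]
        ring_nf

theorem semigroup_Yminus1_X3_estimate_general {n : ℕ}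
    (L : Fin n → ℝ) (hL : ∀ i, 0 < L i) (T : ℝ≥0∞) (hT : CaseAB L T) :
    ∃ C : ℝ, 0 < C ∧ ∀ ψ₀ : (Fin n → ℤ) → ℂ, Ynorm (-1) ψ₀ ≠ ⊤ →
      calXnorm T 3 (ksSemigroup L ψ₀) ≤ ENNReal.ofReal C * Ynorm (-1) ψ₀ := by
  obtain ⟨C, hC, hdecay⟩ := hT.exists_lintegral_exp_neg_mul_ksSymbol_le hL
  refine ⟨C, hC, fun ψ₀ _ => ?_⟩
  simpa [show (3 : ℝ) - 4 = -1 by norm_num] using calXnorm_ksSemigroup_le hC.le hdecay 3 ψ₀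

/-- the semigroup maps `Y^{-1}` into `𝒳³`, with
`‖Sψ₀‖_{𝒳³} ≤ C ‖ψ₀‖_{Y^{-1}}` for a constant `C` depending only on `n`, `L`, `T`. -/
theorem semigroup_Yminus1_X3_estimate {n : ℕ} (hn : 1 ≤ n)
    (L : Fin n → ℝ) (hL : ∀ i, 0 < L i) (T : ℝ≥0∞) (hT : CaseAB L T) :
    ∃ C : ℝ, 0 < C ∧ ∀ ψ₀ : (Fin n → ℤ) → ℂ, Ynorm (-1) ψ₀ ≠ ⊤ →
      calXnorm T 3 (ksSemigroup L ψ₀) ≤ ENNReal.ofReal C * Ynorm (-1) ψ₀ :=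
  semigroup_Yminus1_X3_estimate_general L hL T hT
end
end

section
/- (Weighted estimate for the Duhamel kernel.) Let M2 > 0 satisfy σ(k) > M2|k|⁴ for all k ∈ Ω_I. Then: (1) if g(t) = bt with 0 < b < M2/2, then for all 0 ≤ s ≤ t and all k ∈ Ω_I, (g(t) − g(s))|k| − (t−s)σ(k) ≤ −(M2(t−s)/2)|k|⁴; (2) if g(t) = a t^{1/4} with a > 0, then there exists a constant C = C(a) > 0 such that for all 0 ≤ s ≤ t and all k ∈ Ω_I, (g(t) − g(s))|k| − (t−s)σ(k) ≤ C − (M2(t−s)/2)|k|⁴. -/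
open MeasureTheory
open scoped BigOperators ENNReal NNReal

noncomputable section

lemma Real.rpow_sub_rpow_le_rpow_sub {p s t : ℝ} (hs : 0 ≤ s) (hst : s ≤ t) (hp : 0 ≤ p)
    (hp1 : p ≤ 1) : t ^ p - s ^ p ≤ (t - s) ^ p := by
  have := Real.rpow_add_le_add_rpow (sub_nonneg.mpr hst) hs hp hp1
  rw [sub_add_cancel] at this
  linarith

/-- For `x ≥ max 1 (a / c)` the term `c * x ^ m` already dominates `a * x`. -/
lemma mul_sub_mul_pow_le {a c x : ℝ} {m : ℕ} (ha : 0 ≤ a) (hc : 0 < c) (hx : 0 ≤ x)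
    (hm : 2 ≤ m) : a * x - c * x ^ m ≤ a * max 1 (a / c) := by
  rcases le_total x (max 1 (a / c)) with hxX | hXx
  · nlinarith [pow_nonneg hx m]
  · have hx1 : 1 ≤ x := (le_max_left _ _).trans hXx
    have hxm : x * x ≤ x ^ m := by
      simpa [sq] using pow_le_pow_right₀ hx1 hm
    have hac : a ≤ c * x := (div_le_iff₀' hc).mp ((le_max_right _ _).trans hXx)
    have : a * x ≤ c * x ^ m := by nlinarith
    nlinarith [le_max_left 1 (a / c)]

section KernelExponent

variable {M N σ τ : ℝ}

lemma linear_weight_exponent_le {b : ℝ} (hb : 0 ≤ b) (hbM : b ≤ M / 2) (hN : 1 ≤ N)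
    (hσ : M * N ^ 4 ≤ σ) (hτ : 0 ≤ τ) :
    b * τ * N - τ * σ ≤ -(M * τ / 2) * N ^ 4 := by
  have hN4 : N ≤ N ^ 4 := by simpa using pow_le_pow_right₀ hN (by norm_num : 1 ≤ 4)
  have hweight : b * τ * N ≤ M / 2 * τ * N ^ 4 := by
    calc b * τ * N ≤ M / 2 * τ * N := by gcongr
      _ ≤ M / 2 * τ * N ^ 4 := by gcongr; exact mul_nonneg (by linarith) hτ
  nlinarith [mul_le_mul_of_nonneg_left hσ hτ]

/-- With `x = τ^{1/4} N` the weight `a τ^{1/4} N` is linear and half the dissipation is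
`(M / 2) x⁴`, so their difference is bounded uniformly in `τ` and `N`. -/
lemma quarter_power_weight_exponent_le {a : ℝ} (ha : 0 ≤ a) (hM : 0 < M) (hN : 0 ≤ N)
    (hσ : M * N ^ 4 ≤ σ) (hτ : 0 ≤ τ) :
    a * τ ^ ((1 : ℝ) / 4) * N - τ * σ
      ≤ a * max 1 (a / (M / 2)) - (M * τ / 2) * N ^ 4 := by
  set x := τ ^ ((1 : ℝ) / 4) * N
  have hx4 : x ^ 4 = τ * N ^ 4 := by
    rw [mul_pow, ← Real.rpow_natCast, ← Real.rpow_mul hτ]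
    norm_num
  have hbound := mul_sub_mul_pow_le ha (half_pos hM) (by positivity : 0 ≤ x)
    (by norm_num : 2 ≤ 4)
  nlinarith [mul_le_mul_of_nonneg_left hσ hτ]

end KernelExponent

theorem weighted_duhamel_estimate_general {n : ℕ}
    (L : Fin n → ℝ)
    (M2 : ℝ) (hM2 : 0 < M2)
    (hM2' : ∀ j : Fin n → ℤ, j ≠ 0 → 0 < ksSymbol L j →
      M2 * knorm j ^ (4 : ℕ) < ksSymbol L j) :
    (∀ b : ℝ, 0 < b → b < M2 / 2 →
      ∀ s t : ℝ, 0 ≤ s → s ≤ t →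
        ∀ k : Fin n → ℤ, k ≠ 0 → 0 < ksSymbol L k →
          (b * t - b * s) * knorm k - (t - s) * ksSymbol L k
            ≤ -(M2 * (t - s) / 2) * knorm k ^ (4 : ℕ)) ∧
    (∀ a : ℝ, 0 < a → ∃ C : ℝ, 0 < C ∧
      ∀ s t : ℝ, 0 ≤ s → s ≤ t →
        ∀ k : Fin n → ℤ, k ≠ 0 → 0 < ksSymbol L k →
          (a * t ^ ((1 : ℝ) / 4) - a * s ^ ((1 : ℝ) / 4)) * knorm k
              - (t - s) * ksSymbol L k
            ≤ C - (M2 * (t - s) / 2) * knorm k ^ (4 : ℕ)) := by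
  refine ⟨fun b hb hbM s t hs hst k hk hσ => ?_, fun a ha => ?_⟩
  · rw [← mul_sub]
    exact linear_weight_exponent_le hb.le hbM.le (one_le_knorm hk) (hM2' k hk hσ).le
      (sub_nonneg.mpr hst)
  · refine ⟨a * max 1 (a / (M2 / 2)), by positivity, fun s t hs hst k hk hσ => ?_⟩
    have hN : 0 ≤ knorm k := Real.sqrt_nonneg _
    have hincr : (a * t ^ ((1 : ℝ) / 4) - a * s ^ ((1 : ℝ) / 4)) * knorm k
        ≤ a * (t - s) ^ ((1 : ℝ) / 4) * knorm k := by
      rw [← mul_sub]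
      gcongr
      exact Real.rpow_sub_rpow_le_rpow_sub hs hst (by norm_num) (by norm_num)
    linarith [quarter_power_weight_exponent_le ha.le hM2 hN (hM2' k hk hσ).le
      (sub_nonneg.mpr hst)]

/-- the weighted estimate for the Duhamel kernel. For `M2 > 0` with
`σ(j) > M2|j|⁴` on `Ω_I`:
(1) if `g(t) = bt`, `0 < b < M2/2`, then for all `0 ≤ s ≤ t` and `k ∈ Ω_I`,
`(g(t)-g(s))|k| - (t-s)σ(k) ≤ -(M2(t-s)/2)|k|⁴`;
(2) if `g(t) = a t^{1/4}`, `a > 0`, then there is `C = C(a) > 0` such that for all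
`0 ≤ s ≤ t` and `k ∈ Ω_I`, `(g(t)-g(s))|k| - (t-s)σ(k) ≤ C - (M2(t-s)/2)|k|⁴`. -/
theorem weighted_duhamel_estimate {n : ℕ} (hn : 1 ≤ n)
    (L : Fin n → ℝ) (hL : ∀ i, 0 < L i)
    (M2 : ℝ) (hM2 : 0 < M2)
    (hM2' : ∀ j : Fin n → ℤ, j ≠ 0 → 0 < ksSymbol L j →
      M2 * knorm j ^ (4 : ℕ) < ksSymbol L j) :
    (∀ b : ℝ, 0 < b → b < M2 / 2 →
      ∀ s t : ℝ, 0 ≤ s → s ≤ t →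
        ∀ k : Fin n → ℤ, k ≠ 0 → 0 < ksSymbol L k →
          (b * t - b * s) * knorm k - (t - s) * ksSymbol L k
            ≤ -(M2 * (t - s) / 2) * knorm k ^ (4 : ℕ)) ∧
    (∀ a : ℝ, 0 < a → ∃ C : ℝ, 0 < C ∧
      ∀ s t : ℝ, 0 ≤ s → s ≤ t →
        ∀ k : Fin n → ℤ, k ≠ 0 → 0 < ksSymbol L k →
          (a * t ^ ((1 : ℝ) / 4) - a * s ^ ((1 : ℝ) / 4)) * knorm k
              - (t - s) * ksSymbol L k
            ≤ C - (M2 * (t - s) / 2) * knorm k ^ (4 : ℕ)) :=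
  weighted_duhamel_estimate_general L M2 hM2 hM2'
end
end
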